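/- arXiv:1409.2810 — 8 statements merged into one kernel-verified Lean document; each statement's English description precedes it below -/
import Mathlib

section
/- Let E and F be equivalence relations on sets X and Y respectively. If for every cardinal κ the number of E-classes of cardinality at least κ is at most the number of F-classes of cardinality at least κ, then there exists an injective function φ : X → Y such that for all x, x' ∈ X, x E x' if and only if φ(x) F φ(x'). -/
/-!
Order the `E`-classes so that each class `C` has fewer predecessors than there are `E`-classes of
size at least `#C`. The hypothesis provides at least that many `F`-classes of size at least `#C`,
so a transfinite greedy choice sends the `E`-classes injectively to `F`-classes at least as large,
and it remains to embed each class into its image.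

Such an order: let `μ C` (`tailCard`) be the number of classes of size at least `#C`; order by
`μ`, and inside each level set of `μ` along an initial ordinal. A class of minimal size among those
with `μ ≤ μ C` (resp. `μ < μ C`) shows that there are at most (resp. fewer than) `μ C` of them.
-/

universe u

/-- The set of equivalence classes of `E`. -/
def EqClasses {X : Type u} (E : X → X → Prop) : Set (Set X) :=
  {C | ∃ x, C = {y | E x y}}

/-- The number of `E`-classes of cardinality exactly `κ`. -/
noncomputable def nEq {X : Type u} (E : X → X → Prop) (κ : Cardinal.{u}) : Cardinal.{u} :=
  Cardinal.mk {C : Set X // C ∈ EqClasses E ∧ Cardinal.mk C = κ}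

/-- The number of `E`-classes of cardinality at most `κ`. -/
noncomputable def nLe {X : Type u} (E : X → X → Prop) (κ : Cardinal.{u}) : Cardinal.{u} :=
  Cardinal.mk {C : Set X // C ∈ EqClasses E ∧ Cardinal.mk C ≤ κ}

/-- The number of `E`-classes of cardinality at least `κ`. -/
noncomputable def nGe {X : Type u} (E : X → X → Prop) (κ : Cardinal.{u}) : Cardinal.{u} :=
  Cardinal.mk {C : Set X // C ∈ EqClasses E ∧ κ ≤ Cardinal.mk C}

open Cardinal Set Function

theorem Cardinal.add_lt_of_lt_of_add_le {a b c d : Cardinal} (ha : a < c) (hb : b < d)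
    (h : a + d ≤ c) : a + b < c := by
  rcases le_or_gt ℵ₀ c with hc | hc
  · exact add_lt_of_lt hc ha (hb.trans_le (le_add_self.trans h))
  · exact ((add_lt_add_iff_of_left_lt_aleph0 (ha.trans hc)).mpr hb).trans_le h

theorem exists_ordinal_rank (α : Type u) :
    ∃ p : α → Ordinal.{u}, Injective p ∧ ∀ x, #{y | p y < p x} < #α := by
  obtain ⟨r, _, hr⟩ := exists_ord_eq α
  refine ⟨Ordinal.typein r, Ordinal.typein_injective r, fun x => ?_⟩
  have hlt : Ordinal.typein r x < (#α).ord := hr ▸ Ordinal.typein_lt_type r x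
  calc #{y // Ordinal.typein r y < Ordinal.typein r x}
      = #{y // r y x} := mk_congr (Equiv.subtypeEquivRight fun _ => Ordinal.typein_lt_typein r)
    _ = (Ordinal.typein r x).card := (Ordinal.card_typein x).symm
    _ < #α := lt_ord.mp hlt

theorem exists_ordinal_rank_on_fibers {I : Type u} {β : Type*} (f : I → β) :
    ∃ p : I → Ordinal.{u}, (∀ i i', f i' = f i → p i' = p i → i' = i) ∧
      ∀ i, #{i' | f i' = f i ∧ p i' < p i} < #{i' | f i' = f i} := by
  choose q hq_inj hq_lt using fun b => exists_ordinal_rank {i // f i = b}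
  have hq : ∀ i' b (h : f i' = b), q (f i') ⟨i', rfl⟩ = q b ⟨i', h⟩ := by
    rintro i' b rfl
    rfl
  refine ⟨fun i => q (f i) ⟨i, rfl⟩, fun i i' h he => ?_, fun i => ?_⟩
  · replace he : q (f i) ⟨i', h⟩ = q (f i) ⟨i, rfl⟩ := (hq i' (f i) h).symm.trans he
    exact congrArg Subtype.val (hq_inj _ he)
  · calc #{i' // f i' = f i ∧ q (f i') ⟨i', rfl⟩ < q (f i) ⟨i, rfl⟩}
        = #{y : {i' // f i' = f i} // q (f i) y < q (f i) ⟨i, rfl⟩} :=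
          mk_congr <| (Equiv.subtypeSubtypeEquivSubtypeInter _ _).symm.trans
            (Equiv.subtypeEquivRight fun y => by rw [hq y.1 (f i) y.2])
      _ < _ := hq_lt _ _

theorem exists_injective_forall_mem_of_mk_lt {I J : Type u} {β : Type*} [LinearOrder β]
    [WellFoundedLT β] (key : I → β) (hkey : Injective key) (N : I → Set J)
    (hN : ∀ i, #{i' | key i' < key i} < #(N i)) :
    ∃ g : I → J, Injective g ∧ ∀ i, g i ∈ N i := by
  have step : ∀ i (f : ∀ i', key i' < key i → J), ∃ j ∈ N i, ∀ i' h, f i' h ≠ j := by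
    intro i f
    by_contra! hcover
    have hsub : N i ⊆ range fun p : {i' // key i' < key i} => f p.1 p.2 := fun j hj => by
      obtain ⟨i', h, rfl⟩ := hcover j hj
      exact ⟨⟨i', h⟩, rfl⟩
    exact (hN i).not_ge ((mk_le_mk_of_subset hsub).trans mk_range_le)
  have hwf : WellFounded fun i' i => key i' < key i := InvImage.wf key wellFounded_lt
  set g := hwf.fix fun i f => (step i f).choose
  have hg : ∀ i, g i ∈ N i ∧ ∀ i', key i' < key i → g i' ≠ g i := fun i => by
    rw [show g i = _ from hwf.fix_eq _ i]
    exact (step i _).choose_spec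
  refine ⟨g, fun i i' he => ?_, fun i => (hg i).1⟩
  by_contra hne
  rcases (hkey.ne hne).lt_or_gt with h | h
  · exact (hg i').2 i h he
  · exact (hg i).2 i' h he.symm

section TailCard

variable {I : Type u} {β : Type*} [LinearOrder β] [WellFoundedLT β] (a : I → β)

noncomputable def tailCard (i : I) : Cardinal.{u} := #{i' | a i ≤ a i'}

theorem exists_mem_mk_le_tailCard {S : Set I} (hS : S.Nonempty) :
    ∃ i₀ ∈ S, #S ≤ tailCard a i₀ :=
  ⟨argminOn a S hS, argminOn_mem a S hS, mk_le_mk_of_subset fun _ hi => argminOn_le a S hi⟩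

theorem mk_setOf_tailCard_le (i : I) :
    #{i' | tailCard a i' ≤ tailCard a i} ≤ tailCard a i := by
  obtain ⟨i₀, hi₀, hle⟩ := exists_mem_mk_le_tailCard a
    (S := {i' | tailCard a i' ≤ tailCard a i}) ⟨i, show tailCard a i ≤ _ from le_rfl⟩
  exact hle.trans hi₀

theorem mk_setOf_tailCard_lt (i : I) :
    #{i' | tailCard a i' < tailCard a i} < tailCard a i := by
  rcases eq_empty_or_nonempty {i' | tailCard a i' < tailCard a i} with hempty | hne
  · rw [hempty, mk_eq_zero, pos_iff_ne_zero, tailCard, mk_ne_zero_iff]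
    exact ⟨⟨i, le_rfl⟩⟩
  · obtain ⟨i₀, hi₀, hle⟩ := exists_mem_mk_le_tailCard a hne
    exact hle.trans_lt hi₀

end TailCard

theorem mk_setOf_toLex_lt_lt {I : Type u} {μ : I → Cardinal.{u}} {p : I → Ordinal.{u}} {i : I}
    (hlt : #{i' | μ i' < μ i} < μ i) (hle : #{i' | μ i' ≤ μ i} ≤ μ i)
    (hp : #{i' | μ i' = μ i ∧ p i' < p i} < #{i' | μ i' = μ i}) :
    #{i' | toLex (μ i', p i') < toLex (μ i, p i)} < μ i := by
  have hsplit : {i' | toLex (μ i', p i') < toLex (μ i, p i)} =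
      {i' | μ i' < μ i} ∪ {i' | μ i' = μ i ∧ p i' < p i} := by
    ext
    simp only [Prod.Lex.toLex_lt_toLex, mem_ofPred_eq, mem_union]
  have hlevels : #{i' | μ i' < μ i} + #{i' | μ i' = μ i} ≤ μ i := by
    rw [← mk_union_of_disjoint (disjoint_left.mpr fun _ hlt heq => hlt.ne heq)]
    convert hle using 3
    ext
    simp only [mem_union, mem_ofPred_eq, le_iff_lt_or_eq]
  calc #{i' | toLex (μ i', p i') < toLex (μ i, p i)}
      ≤ #{i' | μ i' < μ i} + #{i' | μ i' = μ i ∧ p i' < p i} := hsplit ▸ mk_union_le _ _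
    _ < μ i := add_lt_of_lt_of_add_le hlt hp hlevels

theorem exists_injective_le_of_forall_mk_le {I J : Type u} {β : Type*} [LinearOrder β]
    [WellFoundedLT β] (a : I → β) (b : J → β)
    (hab : ∀ v, #{i | v ≤ a i} ≤ #{j | v ≤ b j}) :
    ∃ g : I → J, Injective g ∧ ∀ i, a i ≤ b (g i) := by
  obtain ⟨p, hp_inj, hp_lt⟩ := exists_ordinal_rank_on_fibers (tailCard a)
  refine exists_injective_forall_mem_of_mk_lt (fun i => toLex (tailCard a i, p i)) ?_
    (fun i => {j | a i ≤ b j}) fun i => ?_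
  · intro i i' h
    obtain ⟨hμ, hp⟩ := Prod.ext_iff.mp (toLex.injective h)
    exact hp_inj i' i hμ hp
  · exact (mk_setOf_toLex_lt_lt (mk_setOf_tailCard_lt a i) (mk_setOf_tailCard_le a i)
      (hp_lt i)).trans_le (hab (a i))

theorem exists_injective_comp_eq_of_mk_fiber_le {X A Y B : Type u} (p : X → A) (q : Y → B)
    (g : A ↪ B) (h : ∀ a, #{x // p x = a} ≤ #{y // q y = g a}) :
    ∃ φ : X → Y, Injective φ ∧ ∀ x, q (φ x) = g (p x) := by
  have emb a : {x // p x = a} ↪ {y // q y = g a} := ((le_def _ _).mp (h a)).some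
  let φ := (Equiv.sigmaFiberEquiv p).symm.toEmbedding.trans
    ((g.sigmaMap emb).trans (Equiv.sigmaFiberEquiv q).toEmbedding)
  exact ⟨φ, φ.injective, fun x => (emb (p x) ⟨x, rfl⟩).2⟩

section EqClasses

variable {X : Type u} {E : X → X → Prop}

variable (E) in
def classOf (x : X) : EqClasses E := ⟨{y | E x y}, x, rfl⟩

theorem classOf_eq_iff (hE : Equivalence E) {x : X} {C : EqClasses E} :
    classOf E x = C ↔ x ∈ (C : Set X) := by
  obtain ⟨_, x₀, rfl⟩ := C
  refine ⟨fun h => ?_, fun h => Subtype.ext (ext fun y => ?_)⟩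
  · exact (congrArg Subtype.val h).subst (motive := fun S => x ∈ S) (hE.refl x)
  · exact ⟨hE.trans h, hE.trans (hE.symm h)⟩

theorem classOf_eq_classOf_iff (hE : Equivalence E) {x x' : X} :
    classOf E x = classOf E x' ↔ E x x' :=
  (classOf_eq_iff hE).trans ⟨hE.symm, hE.symm⟩

theorem mk_fiber_classOf (hE : Equivalence E) (C : EqClasses E) :
    #{x // classOf E x = C} = #C :=
  mk_congr (Equiv.subtypeEquivRight fun _ => classOf_eq_iff hE)

theorem nGe_eq_mk (κ : Cardinal.{u}) : nGe E κ = #{C : EqClasses E | κ ≤ #C} :=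
  mk_congr (Equiv.subtypeSubtypeEquivSubtypeInter _ _).symm

end EqClasses

theorem stmt2 {X Y : Type u} (E : X → X → Prop) (F : Y → Y → Prop)
    (hE : Equivalence E) (hF : Equivalence F)
    (h : ∀ κ : Cardinal.{u}, nGe E κ ≤ nGe F κ) :
    ∃ φ : X → Y, Function.Injective φ ∧ ∀ x x' : X, E x x' ↔ F (φ x) (φ x') := by
  obtain ⟨g, hg, hle⟩ := exists_injective_le_of_forall_mk_le (fun C : EqClasses E => #C)
    (fun D : EqClasses F => #D) fun κ => by simpa only [nGe_eq_mk] using h κ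
  obtain ⟨φ, hφ, hcomm⟩ := exists_injective_comp_eq_of_mk_fiber_le (classOf E) (classOf F)
    ⟨g, hg⟩ fun C => (mk_fiber_classOf hE C).trans_le
      ((hle C).trans_eq (mk_fiber_classOf hF (g C)).symm)
  refine ⟨φ, hφ, fun x x' => ?_⟩
  rw [← classOf_eq_classOf_iff hE, ← classOf_eq_classOf_iff hF, hcomm, hcomm]
  exact hg.eq_iff.symm
end

section
/- Let κ be an infinite cardinal. The class A of ordinals that can be partitioned into κ many cofinal subsets is closed: if γ is a limit of ordinals in A, then γ ∈ A. -/
/-!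
Send each `ξ < γ` to the least `δ > ξ` among the ordinals `δ ≤ γ` that admit a partition, and put
`ξ` into the class it occupies in a fixed partition of that `δ`. Every `η` with `ξ ≤ η < δ` is sent
to the same `δ`, so each class of the partition of `δ` still meets `[ξ, δ)`; hence the glued
classes are cofinal in `γ`.
-/

universe u

/-- `γ` can be partitioned into `κ` many pairwise disjoint subsets, each cofinal in `γ`. -/
def CanPartition (γ : Ordinal.{u}) (κ : Cardinal.{u}) : Prop :=
  ∃ (ι : Type u) (P : ι → Set Ordinal.{u}),
    Cardinal.mk ι = κ ∧
    Pairwise (fun i j => Disjoint (P i) (P j)) ∧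
    (⋃ i, P i) = Set.Iio γ ∧
    ∀ i, ∀ ξ < γ, ∃ η ∈ P i, ξ ≤ η

open Set Function

section NextAbove

variable {α : Type*} [ConditionallyCompleteLinearOrderBot α]

noncomputable def nextAbove (S : Set α) (a : α) : α :=
  sInf {d ∈ S | a < d}

variable {S : Set α} {a b : α}

theorem nextAbove_le {d : α} (hd : d ∈ S) (had : a < d) : nextAbove S a ≤ d :=
  csInf_le' ⟨hd, had⟩

variable [WellFoundedLT α]

theorem nextAbove_mem (h : ∃ d ∈ S, a < d) : nextAbove S a ∈ S :=
  (csInf_mem (s := {d ∈ S | a < d}) h).1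

theorem lt_nextAbove (h : ∃ d ∈ S, a < d) : a < nextAbove S a :=
  (csInf_mem (s := {d ∈ S | a < d}) h).2

theorem nextAbove_eq_of_le_of_lt (h : ∃ d ∈ S, a < d) (hab : a ≤ b) (hb : b < nextAbove S a) :
    nextAbove S b = nextAbove S a := by
  have hb' : ∃ d ∈ S, b < d := ⟨_, nextAbove_mem h, hb⟩
  exact le_antisymm (nextAbove_le (nextAbove_mem h) hb)
    (nextAbove_le (nextAbove_mem hb') (hab.trans_lt (lt_nextAbove hb')))

end NextAbove

structure IsCofinalPartition {ι : Type*} (P : ι → Set Ordinal.{u}) (γ : Ordinal.{u}) : Prop where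
  pairwise_disjoint : Pairwise (Disjoint on P)
  iUnion_eq : ⋃ i, P i = Iio γ
  cofinal : ∀ i, ∀ ξ < γ, ∃ η ∈ P i, ξ ≤ η

namespace IsCofinalPartition

variable {ι ι' : Type*} {P : ι → Set Ordinal.{u}} {γ : Ordinal.{u}}

theorem lt_of_mem (hP : IsCofinalPartition P γ) {i : ι} {ξ : Ordinal} (h : ξ ∈ P i) : ξ < γ := by
  rw [← mem_Iio, ← hP.iUnion_eq]
  exact mem_iUnion_of_mem i h

theorem comp_equiv (hP : IsCofinalPartition P γ) (e : ι' ≃ ι) : IsCofinalPartition (P ∘ e) γ where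
  pairwise_disjoint _ _ hij := hP.pairwise_disjoint (e.injective.ne hij)
  iUnion_eq := (e.surjective.iUnion_comp P).trans hP.iUnion_eq
  cofinal i := hP.cofinal (e i)

theorem exists_of_forall_lt_exists {S : Set Ordinal.{u}} (hSγ : ∀ δ ∈ S, δ ≤ γ)
    (hS : ∀ ξ < γ, ∃ δ ∈ S, ξ < δ)
    (hP : ∀ δ ∈ S, ∃ P : ι → Set Ordinal.{u}, IsCofinalPartition P δ) :
    ∃ Q : ι → Set Ordinal.{u}, IsCofinalPartition Q γ := by
  choose! P hP using hP
  have hnext : ∀ ξ < γ, IsCofinalPartition (P (nextAbove S ξ)) (nextAbove S ξ) :=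
    fun ξ hξ => hP _ (nextAbove_mem (hS ξ hξ))
  refine ⟨fun i => {ξ | ξ < γ ∧ ξ ∈ P (nextAbove S ξ) i}, ⟨?_, ?_, ?_⟩⟩
  · intro i j hij
    refine disjoint_left.2 fun ξ ⟨hξ, hξi⟩ ⟨_, hξj⟩ => ?_
    exact disjoint_left.1 ((hnext ξ hξ).pairwise_disjoint hij) hξi hξj
  · ext ξ
    simp only [mem_iUnion, mem_ofPred_eq, mem_Iio]
    refine ⟨fun ⟨_, hξ, _⟩ => hξ, fun hξ => ?_⟩
    have : ξ ∈ ⋃ i, P (nextAbove S ξ) i := by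
      rw [(hnext ξ hξ).iUnion_eq]
      exact lt_nextAbove (hS ξ hξ)
    obtain ⟨i, hi⟩ := mem_iUnion.1 this
    exact ⟨i, hξ, hi⟩
  · intro i ξ hξ
    obtain ⟨η, hηP, hξη⟩ := (hnext ξ hξ).cofinal i ξ (lt_nextAbove (hS ξ hξ))
    have hηnext : η < nextAbove S ξ := (hnext ξ hξ).lt_of_mem hηP
    have hηγ : η < γ := hηnext.trans_le (hSγ _ (nextAbove_mem (hS ξ hξ)))
    -- `η` lies in the same interval as `ξ`, so it is classified by the same partition.
    have hsame : nextAbove S η = nextAbove S ξ := nextAbove_eq_of_le_of_lt (hS ξ hξ) hξη hηnext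
    exact ⟨η, ⟨hηγ, hsame ▸ hηP⟩, hξη⟩

end IsCofinalPartition

theorem canPartition_iff {γ : Ordinal.{u}} {κ : Cardinal.{u}} :
    CanPartition γ κ ↔ ∃ P : κ.out → Set Ordinal.{u}, IsCofinalPartition P γ := by
  constructor
  · rintro ⟨ι, P, hι, hdisj, hunion, hcof⟩
    obtain ⟨e⟩ : Nonempty (κ.out ≃ ι) := Cardinal.eq.1 (by rw [Cardinal.mk_out, hι])
    exact ⟨P ∘ e, IsCofinalPartition.comp_equiv ⟨hdisj, hunion, hcof⟩ e⟩
  · rintro ⟨P, ⟨hdisj, hunion, hcof⟩⟩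
    exact ⟨κ.out, P, Cardinal.mk_out κ, hdisj, hunion, hcof⟩

theorem canPartition_of_forall_lt_exists {γ : Ordinal.{u}} {κ : Cardinal.{u}}
    (h : ∀ ξ < γ, ∃ δ, ξ < δ ∧ δ ≤ γ ∧ CanPartition δ κ) : CanPartition γ κ := by
  rw [canPartition_iff]
  refine IsCofinalPartition.exists_of_forall_lt_exists (S := {δ | δ ≤ γ ∧ CanPartition δ κ})
    (fun δ hδ => hδ.1) (fun ξ hξ => ?_) (fun δ hδ => canPartition_iff.1 hδ.2)
  obtain ⟨δ, hξδ, hδ⟩ := h ξ hξ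
  exact ⟨δ, hδ, hξδ⟩

theorem stmt3_general (κ : Cardinal.{u}) (γ : Ordinal.{u})
    (hsup : sSup ({δ : Ordinal.{u} | CanPartition δ κ} ∩ Set.Iio γ) = γ) :
    CanPartition γ κ := by
  refine canPartition_of_forall_lt_exists fun ξ hξ => ?_
  obtain ⟨δ, ⟨hδ, hδγ⟩, hξδ⟩ := exists_lt_of_lt_csSup' (hsup.symm ▸ hξ)
  exact ⟨δ, hξδ, le_of_lt hδγ, hδ⟩

theorem stmt3 (κ : Cardinal.{u}) (hκ : Cardinal.aleph0 ≤ κ) (γ : Ordinal.{u})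
    (hne : ({δ : Ordinal.{u} | CanPartition δ κ} ∩ Set.Iio γ).Nonempty)
    (hsup : sSup ({δ : Ordinal.{u} | CanPartition δ κ} ∩ Set.Iio γ) = γ) :
    CanPartition γ κ :=
  stmt3_general κ γ hsup
end

section
/- Let γ be an ordinal and κ an infinite cardinal. Then γ can be partitioned into κ many pairwise disjoint subsets, each cofinal in γ, if and only if γ = κ · α for some ordinal α (ordinal multiplication). -/
/-!
If `γ` carries `κ` disjoint cofinal sets, then above any `β < γ` each of them has its own element,
so `[β, γ)` has at least `κ` elements and `β + κ.ord ≤ γ`; for `β = κ.ord * (γ / κ.ord)` this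
forces `γ % κ.ord = 0`. Conversely, `κ * κ = κ` splits `κ.ord` into `κ` disjoint sets of size `κ`,
each cofinal because every proper initial segment of `κ.ord` has fewer than `κ` elements, and
pulling this partition back along `ξ ↦ ξ % κ.ord` partitions `κ.ord * α`.
-/

universe u

open Cardinal Function

namespace Ordinal

theorem mk_le_card_of_injective {ι : Type u} {o : Ordinal.{u}} {f : ι → Ordinal.{u}}
    (hf : Injective f) (hlt : ∀ i, f i < o) : #ι ≤ o.card := by
  rw [← mk_toType]
  exact mk_le_of_injective (f := fun i => ToType.mk ⟨f i, hlt i⟩) fun i j hij =>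
    hf (congrArg Subtype.val (ToType.mk.injective hij))

theorem exists_le_of_injective_of_lt_ord {ι : Type u} {f : ι → Ordinal.{u}} (hf : Injective f)
    {ξ : Ordinal.{u}} (hξ : ξ < (#ι).ord) : ∃ i, ξ ≤ f i := by
  by_contra! hlt
  exact (lt_ord.mp hξ).not_ge (mk_le_card_of_injective hf hlt)

theorem dvd_of_forall_add_le {o γ : Ordinal} (ho : o ≠ 0) (h : ∀ β < γ, β + o ≤ γ) : o ∣ γ := by
  rw [dvd_iff_mod_eq_zero]
  by_contra hmod
  have hdecomp := div_add_mod γ o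
  have hlt : o * (γ / o) < γ := by
    conv_rhs => rw [← hdecomp]
    exact lt_add_of_pos_right _ (pos_iff_ne_zero.mpr hmod)
  have := (h _ hlt).trans_eq hdecomp.symm
  rw [add_le_add_iff_left] at this
  exact (mod_lt γ ho).not_ge this

end Ordinal

open Ordinal

theorem CanPartition.add_ord_le {γ : Ordinal.{u}} {κ : Cardinal.{u}} (h : CanPartition γ κ)
    {β : Ordinal.{u}} (hβ : β < γ) : β + κ.ord ≤ γ := by
  obtain ⟨ι, P, rfl, hdisj, hunion, hcof⟩ := h
  choose η hηP hβη using fun i => hcof i β hβ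
  have hηγ : ∀ i, η i < γ := fun i => by
    rw [← Set.mem_Iio, ← hunion]
    exact Set.mem_iUnion_of_mem i (hηP i)
  have hηinj : Injective η := fun i j hij => by
    by_contra hne
    exact Set.disjoint_left.mp (hdisj hne) (hηP i) (hij ▸ hηP j)
  have hinj : Injective fun i => η i - β := fun i j hij => hηinj <| by
    rw [← Ordinal.add_sub_cancel_of_le (hβη i), ← Ordinal.add_sub_cancel_of_le (hβη j)]
    exact congrArg (β + ·) hij
  have hlt : ∀ i, η i - β < γ - β := fun i =>
    lt_sub.mpr ((Ordinal.add_sub_cancel_of_le (hβη i)).trans_lt (hηγ i))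
  exact (le_sub_of_le hβ.le).mp (ord_le.mpr (mk_le_card_of_injective hinj hlt))

theorem canPartition_ord {κ : Cardinal.{u}} (hκ : ℵ₀ ≤ κ) : CanPartition κ.ord κ := by
  set ι := κ.ord.ToType
  have hι : #ι = κ := mk_ord_toType κ
  obtain ⟨e⟩ : Nonempty (ι × ι ≃ ι) := by
    rw [← Cardinal.eq, mk_prod, Cardinal.lift_id, hι, mul_eq_self hκ]
  let g : ι × ι → Ordinal.{u} := fun p => (e p : Ordinal)
  have hg : Injective g := fun p q hpq => e.injective (ToType.mk.symm.injective (Subtype.ext hpq))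
  refine ⟨ι, fun i => Set.range fun x => g (i, x), hι, ?_, ?_, ?_⟩
  · intro i j hij
    rw [Set.disjoint_left]
    rintro _ ⟨x, rfl⟩ ⟨y, hy⟩
    exact hij (congrArg Prod.fst (hg hy)).symm
  · ext ξ
    simp only [Set.mem_iUnion, Set.mem_range, Set.mem_Iio]
    refine ⟨?_, fun hξ => ?_⟩
    · rintro ⟨i, x, rfl⟩
      exact (ToType.mk.symm (e (i, x))).2
    · obtain ⟨p, hp⟩ := e.surjective (ToType.mk ⟨ξ, hξ⟩)
      exact ⟨p.1, p.2, by simp [g, hp]⟩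
  · intro i ξ hξ
    obtain ⟨x, hx⟩ := exists_le_of_injective_of_lt_ord (f := fun x => g (i, x))
      (fun x y hxy => congrArg Prod.snd (hg hxy)) (hι ▸ hξ)
    exact ⟨_, ⟨x, rfl⟩, hx⟩

theorem CanPartition.mul {o : Ordinal.{u}} {κ : Cardinal.{u}} (h : CanPartition o κ)
    (α : Ordinal.{u}) : CanPartition (o * α) κ := by
  obtain ⟨ι, P, hι, hdisj, hunion, hcof⟩ := h
  have ne_zero : ∀ {ξ}, ξ < o * α → o ≠ 0 := fun hξ ho => by simp [ho] at hξ
  have mem_P : ∀ {ξ}, ξ < o * α → ∃ i, ξ % o ∈ P i := fun {ξ} hξ => by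
    have : ξ % o ∈ ⋃ i, P i := hunion ▸ mod_lt ξ (ne_zero hξ)
    exact Set.mem_iUnion.mp this
  refine ⟨ι, fun i => {ξ | ξ < o * α ∧ ξ % o ∈ P i}, hι, ?_, ?_, ?_⟩
  · intro i j hij
    rw [Set.disjoint_left]
    rintro ξ ⟨-, hi⟩ ⟨-, hj⟩
    exact Set.disjoint_left.mp (hdisj hij) hi hj
  · ext ξ
    simp only [Set.mem_iUnion, Set.mem_ofPred_eq, Set.mem_Iio]
    exact ⟨fun ⟨_, hξ, _⟩ => hξ, fun hξ => (mem_P hξ).imp fun _ hi => ⟨hξ, hi⟩⟩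
  · intro i ξ hξ
    have ho := ne_zero hξ
    obtain ⟨η, hηP, hη⟩ := hcof i (ξ % o) (mod_lt ξ ho)
    have hηo : η < o := by
      rw [← Set.mem_Iio, ← hunion]
      exact Set.mem_iUnion_of_mem i hηP
    refine ⟨o * (ξ / o) + η, ⟨?_, ?_⟩, ?_⟩
    · calc o * (ξ / o) + η < o * (ξ / o) + o := by gcongr
        _ = o * Order.succ (ξ / o) := (mul_succ _ _).symm
        _ ≤ o * α := by gcongr; exact Order.succ_le_of_lt ((lt_mul_iff_div_lt ho).mp hξ)
    · rwa [mul_add_mod_self, mod_eq_of_lt hηo]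
    · conv_lhs => rw [← div_add_mod ξ o]
      gcongr

theorem stmt4 (γ : Ordinal.{u}) (κ : Cardinal.{u}) (hκ : Cardinal.aleph0 ≤ κ) :
    CanPartition γ κ ↔ ∃ α : Ordinal.{u}, γ = κ.ord * α := by
  constructor
  · intro h
    have hκ0 : κ.ord ≠ 0 := ord_eq_zero.not.mpr (aleph0_pos.trans_le hκ).ne'
    exact dvd_of_forall_add_le hκ0 fun β hβ => h.add_ord_le hβ
  · rintro ⟨α, rfl⟩
    exact (canPartition_ord hκ).mul α
end

section
/- Let E and F be equivalence relations such that E has exactly one class of size n for each finite n ≥ 1 and exactly one class of size ℵ₀ (and no others), while F has exactly one class of size n for each finite n ≥ 1 (and no others). Then for every cardinal κ, n_{≤κ}(E) ≤ n_{≤κ}(F) and n_{≥κ}(E) ≥ n_{≥κ}(F), but there is no reduction from E to F whose range is F-invariant. -/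
universe u

/-! A reduction `φ` with `F`-invariant range maps each `E`-class `C` onto the `F`-class `φ '' C`,
and `C` is recovered as `φ ⁻¹' (φ '' C)`, so classes go injectively to classes of no larger size.
The infinite `E`-class lands on an `F`-class of some finite size `n`; hence the `E`-classes of
size at most `n`, together with the infinite one, inject into the `F`-classes of size at most `n`,
which are no more numerous than the `E`-classes of size at most `n`: impossible, as these are
finitely many.

The counting inequalities hold because each relation has exactly one class of every size it
realises: the sizes realised by `F` are realised by `E`, and for `κ ≥ ℵ₀` the shift
`ℵ₀ ↦ 1`, `n ↦ n + 1` of sizes embeds the `E`-classes into the `F`-classes. -/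

open Cardinal Set

section Classes

variable {X Y : Type u} {E : X → X → Prop} {F : Y → Y → Prop}

theorem nEq_mk_ne_zero {C : Set X} (hC : C ∈ EqClasses E) : nEq E #C ≠ 0 :=
  mk_ne_zero_iff.mpr ⟨⟨C, hC, rfl⟩⟩

theorem eq_of_mem_eqClasses_of_mk_eq {C C' : Set X} (hE : nEq E #C ≤ 1)
    (hC : C ∈ EqClasses E) (hC' : C' ∈ EqClasses E) (hCC' : #C = #C') : C = C' :=
  congrArg Subtype.val <|
    (le_one_iff_subsingleton.mp hE).elim ⟨C, hC, rfl⟩ ⟨C', hC', hCC'.symm⟩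

theorem nLe_natCast_lt_aleph0 (hE : ∀ μ, nEq E μ ≤ 1) (n : ℕ) : nLe E n < ℵ₀ := by
  have hfin : ∀ C : {C : Set X // C ∈ EqClasses E ∧ #C ≤ n}, #C.1 < ℵ₀ :=
    fun C => C.2.2.trans_lt natCast_lt_aleph0
  have hle : ∀ C : {C : Set X // C ∈ EqClasses E ∧ #C ≤ n}, toNat #C.1 < n + 1 := fun C =>
    Nat.lt_succ_of_le <| by
      simpa using (toNat_le_iff_le_of_lt_aleph0 (hfin C) natCast_lt_aleph0).mpr C.2.2
  have : Finite {C : Set X // C ∈ EqClasses E ∧ #C ≤ n} := by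
    refine Finite.of_injective (fun C => (⟨toNat #C.1, hle C⟩ : Fin (n + 1))) fun C C' hCC' => ?_
    exact Subtype.ext <| eq_of_mem_eqClasses_of_mk_eq (hE _) C.2.1 C'.2.1 <|
      toNat_injOn (hfin C) (hfin C') (congrArg Fin.val hCC')
  exact lt_aleph0_of_finite _

theorem mk_eqClasses_le_of_injOn {P Q : Cardinal.{u} → Prop} (g : Cardinal.{u} → Cardinal.{u})
    (hg : InjOn g {μ | nEq E μ ≠ 0})
    (h : ∀ μ, P μ → nEq E μ ≠ 0 → Q (g μ) ∧ nEq E μ ≤ nEq F (g μ)) :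
    #{C : Set X // C ∈ EqClasses E ∧ P #C} ≤ #{D : Set Y // D ∈ EqClasses F ∧ Q #D} := by
  have hemb : ∀ μ, P μ → Nonempty ({C : Set X // C ∈ EqClasses E ∧ #C = μ} ↪
      {D : Set Y // D ∈ EqClasses F ∧ #D = g μ}) := by
    intro μ hμ
    by_cases h0 : nEq E μ = 0
    · have : IsEmpty {C : Set X // C ∈ EqClasses E ∧ #C = μ} := mk_eq_zero_iff.mp h0
      exact ⟨Function.Embedding.ofIsEmpty⟩
    · exact (le_def _ _).mp (h μ hμ h0).2
  let e μ (hμ : P μ) := (hemb μ hμ).some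
  have he : ∀ μ μ' hμ hμ' a b, μ = μ' → (e μ hμ a).1 = (e μ' hμ' b).1 → a.1 = b.1 := by
    rintro μ _ hμ hμ' a b rfl hab
    exact congrArg Subtype.val ((e μ hμ).injective (Subtype.ext hab))
  refine mk_le_of_injective (f := fun C => ⟨(e _ C.2.2 ⟨C.1, C.2.1, rfl⟩).1,
    (e _ C.2.2 ⟨C.1, C.2.1, rfl⟩).2.1, ?_⟩) fun C C' hCC' => Subtype.ext ?_
  · rw [(e _ C.2.2 ⟨C.1, C.2.1, rfl⟩).2.2]
    exact (h _ C.2.2 (nEq_mk_ne_zero C.2.1)).1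
  · replace hCC' := congrArg Subtype.val hCC'
    refine he _ _ C.2.2 C'.2.2 _ _ (hg (nEq_mk_ne_zero C.2.1) (nEq_mk_ne_zero C'.2.1) ?_) hCC'
    rw [← (e _ C.2.2 ⟨C.1, C.2.1, rfl⟩).2.2, ← (e _ C'.2.2 ⟨C'.1, C'.2.1, rfl⟩).2.2, hCC']

end Classes

def HasSizeSpectrum {X : Type u} (E : X → X → Prop) (S : Set Cardinal.{u}) : Prop :=
  (∀ μ ∈ S, nEq E μ = 1) ∧ ∀ μ ∉ S, nEq E μ = 0

def positiveFiniteCards : Set Cardinal.{u} := {μ | ∃ n : ℕ, 1 ≤ n ∧ μ = n}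

namespace HasSizeSpectrum

variable {X Y : Type u} {E : X → X → Prop} {F : Y → Y → Prop} {S T : Set Cardinal.{u}}

theorem nEq_le_one (hE : HasSizeSpectrum E S) (μ : Cardinal.{u}) : nEq E μ ≤ 1 := by
  by_cases hμ : μ ∈ S
  · exact (hE.1 μ hμ).le
  · exact (hE.2 μ hμ).trans_le zero_le_one

theorem mem_of_nEq_ne_zero (hE : HasSizeSpectrum E S) {μ : Cardinal.{u}} (hμ : nEq E μ ≠ 0) :
    μ ∈ S :=
  by_contra fun hμS => hμ (hE.2 μ hμS)

theorem mk_mem (hE : HasSizeSpectrum E S) {C : Set X} (hC : C ∈ EqClasses E) : #C ∈ S :=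
  hE.mem_of_nEq_ne_zero (nEq_mk_ne_zero hC)

theorem mk_eqClasses_le_of_subset (hF : HasSizeSpectrum F T) (hE : HasSizeSpectrum E S)
    (hTS : T ⊆ S) (P : Cardinal.{u} → Prop) :
    #{D : Set Y // D ∈ EqClasses F ∧ P #D} ≤ #{C : Set X // C ∈ EqClasses E ∧ P #C} :=
  mk_eqClasses_le_of_injOn id (injOn_id _) fun μ hμ hF0 =>
    ⟨hμ, ((hF.1 μ (hF.mem_of_nEq_ne_zero hF0)).trans
      (hE.1 μ (hTS (hF.mem_of_nEq_ne_zero hF0))).symm).le⟩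

theorem nGe_le_nGe_of_subset (hF : HasSizeSpectrum F T) (hE : HasSizeSpectrum E S)
    (hTS : T ⊆ S) (κ : Cardinal.{u}) : nGe F κ ≤ nGe E κ :=
  hF.mk_eqClasses_le_of_subset hE hTS (κ ≤ ·)

theorem nLe_le_nLe (hE : HasSizeSpectrum E (insert ℵ₀ positiveFiniteCards))
    (hF : HasSizeSpectrum F positiveFiniteCards) (κ : Cardinal.{u}) : nLe E κ ≤ nLe F κ := by
  unfold nLe
  rcases lt_or_ge κ ℵ₀ with hκ | hκ
  · refine mk_eqClasses_le_of_injOn (P := (· ≤ κ)) (Q := (· ≤ κ)) id (injOn_id _)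
      fun μ hμκ hμ => ⟨hμκ, ?_⟩
    rcases hE.mem_of_nEq_ne_zero hμ with rfl | hμF
    · exact absurd (hμκ.trans_lt hκ) (lt_irrefl _)
    · exact ((hE.1 μ (mem_insert_of_mem _ hμF)).trans (hF.1 μ hμF).symm).le
  · refine mk_eqClasses_le_of_injOn (P := (· ≤ κ)) (Q := (· ≤ κ))
      (fun μ => if μ < ℵ₀ then μ + 1 else 1) ?_ fun μ _ hμ => ?_
    · rintro μ hμ μ' hμ' hgμ
      rcases hE.mem_of_nEq_ne_zero hμ with rfl | ⟨n, hn, rfl⟩ <;>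
        rcases hE.mem_of_nEq_ne_zero hμ' with rfl | ⟨n', hn', rfl⟩ <;>
        simp only [lt_self_iff_false, natCast_lt_aleph0, if_true, if_false] at hgμ <;>
        norm_cast at hgμ ⊢ <;> omega
    · have hgμ : (if μ < ℵ₀ then μ + 1 else 1) ∈ positiveFiniteCards := by
        rcases hE.mem_of_nEq_ne_zero hμ with rfl | ⟨n, hn, rfl⟩
        · exact ⟨1, le_rfl, by simp⟩
        · exact ⟨n + 1, by omega, by simp⟩
      obtain ⟨n, -, hn⟩ := id hgμ
      refine ⟨by rw [hn]; exact natCast_lt_aleph0.le.trans hκ, ?_⟩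
      rw [hE.1 μ (hE.mem_of_nEq_ne_zero hμ), hF.1 _ hgμ]

end HasSizeSpectrum

section Reduction

variable {X Y : Type u} {E : X → X → Prop} {F : Y → Y → Prop} {φ : X → Y}

theorem image_setOf_eq_of_reduction (hφ : ∀ x x', E x x' ↔ F (φ x) (φ x'))
    (hinv : ∀ y y', y ∈ range φ → F y y' → y' ∈ range φ) (x : X) :
    φ '' {y | E x y} = {y | F (φ x) y} := by
  ext y
  constructor
  · rintro ⟨x', hxx', rfl⟩
    exact (hφ x x').mp hxx'
  · intro hy
    obtain ⟨x', rfl⟩ := hinv _ y ⟨x, rfl⟩ hy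
    exact ⟨x', (hφ x x').mpr hy, rfl⟩

theorem image_mem_eqClasses_of_reduction (hφ : ∀ x x', E x x' ↔ F (φ x) (φ x'))
    (hinv : ∀ y y', y ∈ range φ → F y y' → y' ∈ range φ) {C : Set X} (hC : C ∈ EqClasses E) :
    φ '' C ∈ EqClasses F := by
  obtain ⟨x, rfl⟩ := hC
  exact ⟨φ x, image_setOf_eq_of_reduction hφ hinv x⟩

theorem preimage_setOf_eq_of_reduction (hφ : ∀ x x', E x x' ↔ F (φ x) (φ x')) (x : X) :
    φ ⁻¹' {y | F (φ x) y} = {y | E x y} :=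
  ext fun x' => (hφ x x').symm

theorem mk_eqClasses_le_of_reduction (hφ : ∀ x x', E x x' ↔ F (φ x) (φ x'))
    (hinv : ∀ y y', y ∈ range φ → F y y' → y' ∈ range φ) {P Q : Cardinal.{u} → Prop}
    (hPQ : ∀ C ∈ EqClasses E, P #C → Q #(φ '' C)) :
    #{C : Set X // C ∈ EqClasses E ∧ P #C} ≤ #{D : Set Y // D ∈ EqClasses F ∧ Q #D} := by
  refine mk_le_of_injective (f := fun C => ⟨φ '' C.1,
    image_mem_eqClasses_of_reduction hφ hinv C.2.1, hPQ C.1 C.2.1 C.2.2⟩) ?_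
  rintro ⟨_, ⟨x, rfl⟩, _⟩ ⟨_, ⟨x', rfl⟩, _⟩ hxx'
  refine Subtype.ext ?_
  simpa only [image_setOf_eq_of_reduction hφ hinv, preimage_setOf_eq_of_reduction hφ] using
    congrArg (fun D => φ ⁻¹' D.1) hxx'

theorem not_exists_reduction_with_invariant_range
    (hE : HasSizeSpectrum E (insert ℵ₀ positiveFiniteCards))
    (hF : HasSizeSpectrum F positiveFiniteCards) :
    ¬ ∃ φ : X → Y, (∀ x x', E x x' ↔ F (φ x) (φ x')) ∧
      ∀ y y', y ∈ range φ → F y y' → y' ∈ range φ := by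
  rintro ⟨φ, hφ, hinv⟩
  obtain ⟨⟨C₀, hC₀, hC₀ℵ₀⟩⟩ : Nonempty {C : Set X // C ∈ EqClasses E ∧ #C = ℵ₀} :=
    mk_ne_zero_iff.mp <| (hE.1 ℵ₀ (mem_insert _ _)).trans_ne one_ne_zero
  obtain ⟨n, -, hn⟩ := hF.mk_mem (image_mem_eqClasses_of_reduction hφ hinv hC₀)
  have hreduce : #{C : Set X // C ∈ EqClasses E ∧ (#C ≤ n ∨ #C = ℵ₀)} ≤ nLe F n := by
    refine mk_eqClasses_le_of_reduction (P := fun μ => μ ≤ n ∨ μ = ℵ₀) (Q := (· ≤ n)) hφ hinv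
      fun C hC hCn => ?_
    rcases hCn with hCn | hCℵ₀
    · exact mk_image_le.trans hCn
    · rw [eq_of_mem_eqClasses_of_mk_eq (hE.nEq_le_one _) hC hC₀ (hCℵ₀.trans hC₀ℵ₀.symm), hn]
  have hcompare : nLe F n ≤ nLe E n := hF.mk_eqClasses_le_of_subset hE (subset_insert _ _) (· ≤ n)
  have hssubset : {C | C ∈ EqClasses E ∧ #C ≤ n} ⊂ {C | C ∈ EqClasses E ∧ (#C ≤ n ∨ #C = ℵ₀)} :=
    ssubset_of_subset_not_superset (fun _ hC => ⟨hC.1, .inl hC.2⟩) fun hsub =>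
      ((hsub ⟨hC₀, .inr hC₀ℵ₀⟩).2.trans_lt natCast_lt_aleph0).ne hC₀ℵ₀
  have hfinite : {C | C ∈ EqClasses E ∧ (#C ≤ n ∨ #C = ℵ₀)}.Finite :=
    lt_aleph0_iff_set_finite.mp (hreduce.trans_lt (nLe_natCast_lt_aleph0 hF.nEq_le_one n))
  exact (card_lt_card_of_right_finite hfinite hssubset).not_ge (hreduce.trans hcompare)

end Reduction

theorem stmt11_general {X Y : Type u} (E : X → X → Prop) (F : Y → Y → Prop)
    (hE1 : ∀ n : ℕ, 1 ≤ n → nEq E (n : Cardinal.{u}) = 1)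
    (hE2 : nEq E Cardinal.aleph0 = 1)
    (hE3 : ∀ κ : Cardinal.{u}, (∀ n : ℕ, 1 ≤ n → κ ≠ (n : Cardinal.{u})) →
        κ ≠ Cardinal.aleph0 → nEq E κ = 0)
    (hF1 : ∀ n : ℕ, 1 ≤ n → nEq F (n : Cardinal.{u}) = 1)
    (hF2 : ∀ κ : Cardinal.{u}, (∀ n : ℕ, 1 ≤ n → κ ≠ (n : Cardinal.{u})) → nEq F κ = 0) :
    (∀ κ : Cardinal.{u}, nLe E κ ≤ nLe F κ ∧ nGe F κ ≤ nGe E κ) ∧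
      ¬ ∃ φ : X → Y, (∀ x x' : X, E x x' ↔ F (φ x) (φ x')) ∧
        ∀ y y' : Y, y ∈ Set.range φ → F y y' → y' ∈ Set.range φ := by
  have hF : HasSizeSpectrum F positiveFiniteCards :=
    ⟨by rintro _ ⟨n, hn, rfl⟩; exact hF1 n hn,
      fun μ hμ => hF2 μ fun n hn hμn => hμ ⟨n, hn, hμn⟩⟩
  have hE : HasSizeSpectrum E (insert ℵ₀ positiveFiniteCards) :=
    ⟨by rintro _ (rfl | ⟨n, hn, rfl⟩); exacts [hE2, hE1 n hn],
      fun μ hμ => hE3 μ (fun n hn hμn => hμ (.inr ⟨n, hn, hμn⟩)) fun hμℵ₀ => hμ (.inl hμℵ₀)⟩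
  exact ⟨fun κ => ⟨hE.nLe_le_nLe hF κ, hF.nGe_le_nGe_of_subset hE (subset_insert _ _) κ⟩,
    not_exists_reduction_with_invariant_range hE hF⟩

theorem stmt11 {X Y : Type u} (E : X → X → Prop) (F : Y → Y → Prop)
    (hE : Equivalence E) (hF : Equivalence F)
    (hE1 : ∀ n : ℕ, 1 ≤ n → nEq E (n : Cardinal.{u}) = 1)
    (hE2 : nEq E Cardinal.aleph0 = 1)
    (hE3 : ∀ κ : Cardinal.{u}, (∀ n : ℕ, 1 ≤ n → κ ≠ (n : Cardinal.{u})) →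
        κ ≠ Cardinal.aleph0 → nEq E κ = 0)
    (hF1 : ∀ n : ℕ, 1 ≤ n → nEq F (n : Cardinal.{u}) = 1)
    (hF2 : ∀ κ : Cardinal.{u}, (∀ n : ℕ, 1 ≤ n → κ ≠ (n : Cardinal.{u})) → nEq F κ = 0) :
    (∀ κ : Cardinal.{u}, nLe E κ ≤ nLe F κ ∧ nGe F κ ≤ nGe E κ) ∧
      ¬ ∃ φ : X → Y, (∀ x x' : X, E x x' ↔ F (φ x) (φ x')) ∧
        ∀ y y' : Y, y ∈ Set.range φ → F y y' → y' ∈ Set.range φ :=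
  stmt11_general E F hE1 hE2 hE3 hF1 hF2
end

section
/- Let E be an equivalence relation with exactly ℵ₀ many classes of size 1 and, for each countable limit ordinal α, exactly ℵ₀ many classes of size ℵ_α (and no other classes). Let F be an equivalence relation with exactly ℵ₀ many classes of size 1 and, for each countable limit ordinal α, exactly ℵ₀ many classes of size ℵ_{α+1} (and no other classes). Then there is no invariant reduction from E to F, i.e., no reduction φ from E to F whose range is F-invariant. -/
universe u

/-!
An invariant reduction maps every `E`-class onto an `F`-class, injectively on classes and
without increasing cardinality. For a countable limit `α`, an `E`-class of size `ℵ_α` therefore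
goes either to a singleton, which happens for only countably many `α`, or to a class of size
`ℵ_(β+1)` with `β < α`, and each such `β` arises from only countably many `α`. A regressive map on
the countable limit ordinals with countable fibers cannot exist (the countable-fiber case of
Fodor's lemma): iterating the bounds of the fibers countably often produces a limit `α < ω₁` that
lies in no fiber below it.
-/
open Cardinal Ordinal Set Order

namespace Ordinal

theorem countable_Iio_of_lt_omega_one {x : Ordinal.{u}} (hx : x < ω₁) : Countable (Iio x) := by
  rw [← mk_le_aleph0_iff, Cardinal.mk_Iio_ordinal, lift_le_aleph0, ← lt_aleph_one_iff]
  exact lt_omega_iff_card_lt.mp hx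

theorem exists_lt_omega_one_forall_lt {s : Set Ordinal.{u}} (hs : s.Countable) :
    ∃ γ < ω₁, ∀ α ∈ s, α < ω₁ → α < γ := by
  have : Countable ↥(s ∩ Iio ω₁) := (hs.mono inter_subset_left).to_subtype
  set g : ↥(s ∩ Iio ω₁) → Ordinal.{u} := fun α => succ α.1
  refine ⟨⨆ α, g α, iSup_lt_omega_one fun α => ?_, fun α hα hα₁ => ?_⟩
  · exact (isSuccLimit_omega 1).succ_lt α.2.2
  · exact (lt_succ α).trans_le (Ordinal.le_iSup g ⟨α, hα, hα₁⟩)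

theorem exists_isSuccLimit_lt_omega_one_closed {γ : Ordinal.{u}} (hγ : γ < ω₁)
    {b : Ordinal.{u} → Ordinal.{u}} (hb : ∀ β < ω₁, b β < ω₁) :
    ∃ α < ω₁, IsSuccLimit α ∧ γ < α ∧ ∀ β < α, b β < α := by
  set f : Ordinal.{u} → Ordinal.{u} := fun x => max (succ x) (⨆ β : Iio x, b β)
  have lt_f x : x < f x := (lt_succ x).trans_le (le_max_left _ _)
  have f_lt {x} (hx : x < ω₁) : f x < ω₁ := by
    have := countable_Iio_of_lt_omega_one hx
    exact max_lt ((isSuccLimit_omega 1).succ_lt hx)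
      (iSup_lt_omega_one fun β => hb β (β.2.trans hx))
  have iterate_lt n : f^[n] γ < nfp f γ :=
    (lt_f _).trans_le <| by
      simpa only [← Function.iterate_succ_apply' f] using iterate_le_nfp f γ (n + 1)
  refine ⟨nfp f γ, nfp_lt_ord (by simp) (fun x hx => f_lt hx) hγ, ?_, iterate_lt 0, ?_⟩
  · refine isSuccLimit_iff.mpr
      ⟨(iterate_lt 0).ne_bot, isSuccPrelimit_of_succ_lt fun a ha => ?_⟩
    obtain ⟨n, hn⟩ := lt_nfp_iff.mp ha
    exact (succ_le_of_lt hn).trans_lt (iterate_lt n)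
  · intro β hβ
    obtain ⟨n, hn⟩ := lt_nfp_iff.mp hβ
    calc b β ≤ ⨆ β' : Iio (f^[n] γ), b β' :=
          Ordinal.le_iSup (fun β' : Iio (f^[n] γ) => b β') ⟨β, hn⟩
      _ ≤ f^[n + 1] γ := by rw [Function.iterate_succ_apply']; exact le_max_right _ _
      _ < nfp f γ := iterate_lt (n + 1)

theorem exists_isSuccLimit_lt_omega_one_of_countable_fibers {s : Set Ordinal.{u}} (hs : s.Countable)
    {R : Ordinal.{u} → Ordinal.{u} → Prop} (hR : ∀ β < ω₁, {α | R α β}.Countable) :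
    ∃ α < ω₁, IsSuccLimit α ∧ α ∉ s ∧ ∀ β < α, ¬ R α β := by
  obtain ⟨γ, hγ, hsγ⟩ := exists_lt_omega_one_forall_lt hs
  have fiber_bounded β :
      ∃ b < ω₁, β < ω₁ → ∀ α, R α β → α < ω₁ → α < b := by
    by_cases hβ : β < ω₁
    · obtain ⟨b, hb, hRb⟩ := exists_lt_omega_one_forall_lt (hR β hβ)
      exact ⟨b, hb, fun _ => hRb⟩
    · exact ⟨0, omega_pos 1, fun h => absurd h hβ⟩
  choose b hb hRb using fiber_bounded
  obtain ⟨α, hα, hlim, hγα, hclosed⟩ :=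
    exists_isSuccLimit_lt_omega_one_closed hγ fun β _ => hb β
  refine ⟨α, hα, hlim, fun hαs => (hsγ α hαs hα).asymm hγα, fun β hβ hRαβ => ?_⟩
  exact (hRb β (hβ.trans hα) α hRαβ hα).asymm (hclosed β hβ)

end Ordinal

section InvariantReduction

variable {X Y : Type u} {E : X → X → Prop} {F : Y → Y → Prop}

theorem Equivalence.setOf_eq_setOf_iff (hE : Equivalence E) {x x' : X} :
    {y | E x y} = {y | E x' y} ↔ E x x' := by
  refine ⟨fun h => ?_, fun h => ?_⟩
  · have : x' ∈ {y | E x' y} := hE.refl x'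
    rwa [← h] at this
  · ext y
    exact ⟨hE.trans (hE.symm h), hE.trans h⟩

theorem exists_mk_setOf_eq_of_nEq_ne_zero {κ : Cardinal.{u}} (h : nEq E κ ≠ 0) :
    ∃ x, #{y | E x y} = κ := by
  obtain ⟨⟨_, ⟨x, rfl⟩, hx⟩⟩ := mk_ne_zero_iff.mp h
  exact ⟨x, hx⟩

theorem nEq_mk_setOf_ne_zero (x : X) : nEq E #{y | E x y} ≠ 0 :=
  mk_ne_zero_iff.mpr ⟨⟨_, ⟨x, rfl⟩, rfl⟩⟩

variable {φ : X → Y}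

theorem image_setOf_of_invariant_reduction (hred : ∀ x x' : X, E x x' ↔ F (φ x) (φ x'))
    (hinv : ∀ y y' : Y, y ∈ range φ → F y y' → y' ∈ range φ) (x : X) :
    φ '' {y | E x y} = {y | F (φ x) y} := by
  ext y
  refine ⟨fun ⟨x', hx', hy⟩ => hy ▸ (hred x x').mp hx', fun hy => ?_⟩
  obtain ⟨x', rfl⟩ := hinv (φ x) y ⟨x, rfl⟩ hy
  exact ⟨x', (hred x x').mpr hy, rfl⟩

theorem countable_setOf_mk_of_nEq_le_aleph0 (hE : Equivalence E) (hF : Equivalence F)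
    (hred : ∀ x x' : X, E x x' ↔ F (φ x) (φ x')) {κ : Cardinal.{u}}
    (hκ : nEq F κ ≤ ℵ₀) :
    {c | ∃ x, #{y | E x y} = c ∧ #{y | F (φ x) y} = κ}.Countable := by
  have hclasses : {C | C ∈ EqClasses F ∧ #C = κ}.Countable :=
    countable_coe_iff.mp (mk_le_aleph0_iff.mp hκ)
  -- an `F`-class is the image of at most one `E`-class
  have hsub (C : Set Y) : {c | ∃ x, {y | F (φ x) y} = C ∧ #{y | E x y} = c}.Subsingleton := by
    rintro _ ⟨x, hxC, rfl⟩ _ ⟨x', hx'C, rfl⟩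
    have hFx : F (φ x) (φ x') := hF.setOf_eq_setOf_iff.mp (hxC.trans hx'C.symm)
    rw [hE.setOf_eq_setOf_iff.mpr ((hred x x').mpr hFx)]
  refine (hclasses.biUnion fun C _ => (hsub C).countable).mono ?_
  rintro _ ⟨x, rfl, hx⟩
  exact mem_biUnion ⟨⟨φ x, rfl⟩, hx⟩ ⟨x, rfl, rfl⟩

end InvariantReduction

theorem stmt12_general {X Y : Type u} (E : X → X → Prop) (F : Y → Y → Prop)
    (hE : Equivalence E) (hF : Equivalence F)
    (hE2 : ∀ α : Ordinal.{u}, α < (Cardinal.aleph 1).ord → Order.IsSuccLimit α →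
        nEq E (Cardinal.aleph α) = Cardinal.aleph0)
    (hF1 : nEq F 1 = Cardinal.aleph0)
    (hF2 : ∀ α : Ordinal.{u}, α < (Cardinal.aleph 1).ord → Order.IsSuccLimit α →
        nEq F (Cardinal.aleph (α + 1)) = Cardinal.aleph0)
    (hF3 : ∀ κ : Cardinal.{u}, κ ≠ 1 →
        (¬ ∃ α : Ordinal.{u}, α < (Cardinal.aleph 1).ord ∧ Order.IsSuccLimit α ∧ κ = Cardinal.aleph (α + 1)) →
        nEq F κ = 0) :
    ¬ ∃ φ : X → Y, (∀ x x' : X, E x x' ↔ F (φ x) (φ x')) ∧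
        ∀ y y' : Y, y ∈ Set.range φ → F y y' → y' ∈ Set.range φ := by
  rintro ⟨φ, hred, hinv⟩
  simp only [ord_aleph] at hE2 hF2 hF3
  have countable_of_nEq {κ : Cardinal.{u}} (hκ : nEq F κ = ℵ₀) :
      {α | ∃ x, #{y | E x y} = ℵ_ α ∧ #{y | F (φ x) y} = κ}.Countable :=
    (countable_setOf_mk_of_nEq_le_aleph0 hE hF hred hκ.le).preimage aleph.injective
  obtain ⟨α, hα, hlim, hα_not_one, hα_not_pressed⟩ :=
    Ordinal.exists_isSuccLimit_lt_omega_one_of_countable_fibers (countable_of_nEq hF1)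
      (R := fun α β => IsSuccLimit β ∧ ∃ x, #{y | E x y} = ℵ_ α ∧ #{y | F (φ x) y} = ℵ_ (β + 1))
      fun β hβ => by
        by_cases hβlim : IsSuccLimit β
        · exact (countable_of_nEq (hF2 β hβ hβlim)).mono fun _ h => h.2
        · exact countable_empty.mono fun _ h => absurd h.1 hβlim
  obtain ⟨x, hx⟩ := exists_mk_setOf_eq_of_nEq_ne_zero (hE2 α hα hlim ▸ aleph0_ne_zero)
  have hle : #{y | F (φ x) y} ≤ ℵ_ α := by
    rw [← hx, ← image_setOf_of_invariant_reduction hred hinv]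
    exact mk_image_le
  by_cases hone : #{y | F (φ x) y} = 1
  · exact hα_not_one ⟨x, hx, hone⟩
  · obtain ⟨β, hβ, hβlim, hβeq⟩ := not_not.mp (mt (hF3 _ hone) (nEq_mk_setOf_ne_zero _))
    rw [hβeq, aleph_le_aleph, ← succ_eq_add_one, succ_le_iff] at hle
    exact hα_not_pressed β hle ⟨hβlim, x, hx, hβeq⟩

theorem stmt12 {X Y : Type u} (E : X → X → Prop) (F : Y → Y → Prop)
    (hE : Equivalence E) (hF : Equivalence F)
    (hE1 : nEq E 1 = Cardinal.aleph0)
    (hE2 : ∀ α : Ordinal.{u}, α < (Cardinal.aleph 1).ord → Order.IsSuccLimit α →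
        nEq E (Cardinal.aleph α) = Cardinal.aleph0)
    (hE3 : ∀ κ : Cardinal.{u}, κ ≠ 1 →
        (¬ ∃ α : Ordinal.{u}, α < (Cardinal.aleph 1).ord ∧ Order.IsSuccLimit α ∧ κ = Cardinal.aleph α) →
        nEq E κ = 0)
    (hF1 : nEq F 1 = Cardinal.aleph0)
    (hF2 : ∀ α : Ordinal.{u}, α < (Cardinal.aleph 1).ord → Order.IsSuccLimit α →
        nEq F (Cardinal.aleph (α + 1)) = Cardinal.aleph0)
    (hF3 : ∀ κ : Cardinal.{u}, κ ≠ 1 →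
        (¬ ∃ α : Ordinal.{u}, α < (Cardinal.aleph 1).ord ∧ Order.IsSuccLimit α ∧ κ = Cardinal.aleph (α + 1)) →
        nEq F κ = 0) :
    ¬ ∃ φ : X → Y, (∀ x x' : X, E x x' ↔ F (φ x) (φ x')) ∧
        ∀ y y' : Y, y ∈ Set.range φ → F y y' → y' ∈ Set.range φ :=
  stmt12_general E F hE hF hE2 hF1 hF2 hF3
end

section
/- Let E and F be equivalence relations on sets X and Y. If there exists an injective reduction from E to F whose range is F-invariant, and also an injective reduction from F to E whose range is E-invariant, then E and F are isomorphic: there is a bijection φ : X → Y with x E x' iff φ(x) F φ(x'). -/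
/-!
An injective reduction `f` from `s` to `t` with `t`-invariant range maps every `s`-class
bijectively onto a `t`-class, so it induces an injection of quotients together with a bijection
of each class onto its image. Schröder–Bernstein, in the form that keeps a pointwise relation,
applied to the two induced injections of quotients with the relation "the classes are
equinumerous", gives a bijection of quotients matching equinumerous classes; gluing bijections
between corresponding classes yields the isomorphism.
-/

open Function Set

namespace Setoid

variable {α β : Type*} {s : Setoid α} {t : Setoid β}

noncomputable def equivOfQuotientEquiv (q : Quotient s ≃ Quotient t)
    (e : ∀ c, {a // Quotient.mk s a = c} ≃ {b // Quotient.mk t b = q c}) : α ≃ β :=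
  (Equiv.sigmaFiberEquiv (Quotient.mk s)).symm.trans
    ((Equiv.sigmaCongr q e).trans (Equiv.sigmaFiberEquiv (Quotient.mk t)))

theorem mk_equivOfQuotientEquiv (q : Quotient s ≃ Quotient t)
    (e : ∀ c, {a // Quotient.mk s a = c} ≃ {b // Quotient.mk t b = q c}) (a : α) :
    Quotient.mk t (equivOfQuotientEquiv q e a) = q (Quotient.mk s a) :=
  (e _ _).2

theorem rel_iff_equivOfQuotientEquiv (q : Quotient s ≃ Quotient t)
    (e : ∀ c, {a // Quotient.mk s a = c} ≃ {b // Quotient.mk t b = q c}) (a a' : α) :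
    s a a' ↔ t (equivOfQuotientEquiv q e a) (equivOfQuotientEquiv q e a') :=
  calc s a a' ↔ Quotient.mk s a = Quotient.mk s a' := Quotient.eq.symm
    _ ↔ q (Quotient.mk s a) = q (Quotient.mk s a') := q.apply_eq_iff_eq.symm
    _ ↔ _ := by
      rw [← mk_equivOfQuotientEquiv q e, ← mk_equivOfQuotientEquiv q e, Quotient.eq]

section Reduction

variable {f : α → β} (hred : ∀ a a', s a a' ↔ t (f a) (f a'))

theorem quotientMap_injective :
    Injective (Quotient.map f fun a a' ↦ (hred a a').1) := by
  refine Quotient.ind₂ fun a a' h ↦ Quotient.sound ?_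
  exact (hred a a').2 (Quotient.exact h)

theorem nonempty_fiber_equiv_of_injective (hf : Injective f)
    (hinv : ∀ b b', b ∈ range f → t b b' → b' ∈ range f) (c : Quotient s) :
    Nonempty ({a // Quotient.mk s a = c} ≃
      {b // Quotient.mk t b = Quotient.map f (fun a a' ↦ (hred a a').1) c}) := by
  induction c using Quotient.ind with | _ a₀ => ?_
  refine ⟨Equiv.ofBijective (fun a ↦ ⟨f a.1, ?_⟩) ⟨?_, ?_⟩⟩
  · exact congrArg (Quotient.map f fun a a' ↦ (hred a a').1) a.2
  · exact fun a a' h ↦ Subtype.ext (hf (congrArg Subtype.val h))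
  · rintro ⟨b, hb⟩
    have hfb : t (f a₀) b := Quotient.exact hb.symm
    obtain ⟨a, rfl⟩ := hinv _ _ (mem_range_self a₀) hfb
    exact ⟨⟨a, (Quotient.sound ((hred a₀ a).2 hfb)).symm⟩, rfl⟩

end Reduction

end Setoid

universe u

theorem stmt14 {X Y : Type u} (E : X → X → Prop) (F : Y → Y → Prop)
    (hE : Equivalence E) (hF : Equivalence F)
    (h1 : ∃ φ : X → Y, Function.Injective φ ∧ (∀ x x' : X, E x x' ↔ F (φ x) (φ x')) ∧
        ∀ y y' : Y, y ∈ Set.range φ → F y y' → y' ∈ Set.range φ)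
    (h2 : ∃ ψ : Y → X, Function.Injective ψ ∧ (∀ y y' : Y, F y y' ↔ E (ψ y) (ψ y')) ∧
        ∀ x x' : X, x ∈ Set.range ψ → E x x' → x' ∈ Set.range ψ) :
    ∃ φ : X → Y, Function.Bijective φ ∧ ∀ x x' : X, E x x' ↔ F (φ x) (φ x') := by
  obtain ⟨φ, φ_inj, φ_red, φ_inv⟩ := h1
  obtain ⟨ψ, ψ_inj, ψ_red, ψ_inv⟩ := h2
  let s : Setoid X := ⟨E, hE⟩
  let t : Setoid Y := ⟨F, hF⟩
  obtain ⟨q, hq, hfiber⟩ := Embedding.schroeder_bernstein_of_rel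
    (Setoid.quotientMap_injective (s := s) (t := t) φ_red)
    (Setoid.quotientMap_injective (s := t) (t := s) ψ_red)
    (fun c d ↦ Nonempty ({x // Quotient.mk s x = c} ≃ {y // Quotient.mk t y = d}))
    (Setoid.nonempty_fiber_equiv_of_injective φ_red φ_inj φ_inv)
    (fun d ↦ (Setoid.nonempty_fiber_equiv_of_injective ψ_red ψ_inj ψ_inv d).map Equiv.symm)
  let e := Setoid.equivOfQuotientEquiv (Equiv.ofBijective q hq) fun c ↦ (hfiber c).some
  exact ⟨e, e.bijective, Setoid.rel_iff_equivOfQuotientEquiv (s := s) (t := t) _ _⟩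
end

section
/- There exist equivalence relations E and F (on countable sets) such that there is a surjective reduction from E to F and a surjective reduction from F to E, but E and F are not isomorphic. Explicitly, let E have exactly one class of size n for each even n ≥ 2, F have exactly one class of size n for each odd n ≥ 3, and both have ℵ₀ many classes of size 1 and no other classes. -/
/-! Both reductions send each class onto a class and distinct classes to distinct classes.
From `E` to `F`, the class of size 2 collapses to a fresh singleton, the class of size `2n + 4`
is folded onto the class of size `2n + 3`, and the singletons are shifted to make room; from `F`
to `E`, the class of size `2n + 3` is folded onto the class of size `2n + 2`. An isomorphism,
on the other hand, maps each class bijectively onto a class, but `F` has no class of size 2. -/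

/-- A set with one class of size `n` for each even `n ≥ 2` (the `Sum.inr` part, where the
`n`-th class has size `2 * n + 2`), plus `ℵ₀` many classes of size 1 (the `Sum.inl` part). -/
def X15 : Type := ℕ ⊕ (Σ n : ℕ, Fin (2 * n + 2))

/-- A set with one class of size `n` for each odd `n ≥ 3` (the `Sum.inr` part, where the
`n`-th class has size `2 * n + 3`), plus `ℵ₀` many classes of size 1 (the `Sum.inl` part). -/
def Y15 : Type := ℕ ⊕ (Σ n : ℕ, Fin (2 * n + 3))

def E15 : X15 → X15 → Prop
  | Sum.inl a, Sum.inl b => a = b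
  | Sum.inr p, Sum.inr q => p.1 = q.1
  | _, _ => False

def F15 : Y15 → Y15 → Prop
  | Sum.inl a, Sum.inl b => a = b
  | Sum.inr p, Sum.inr q => p.1 = q.1
  | _, _ => False

open Function

theorem Nat.card_subtype_rel_eq_of_bijective {α β : Type*} {r : α → α → Prop}
    {s : β → β → Prop} {φ : α → β} (hφ : Bijective φ) (hred : ∀ x x', r x x' ↔ s (φ x) (φ x'))
    (x : α) : Nat.card {x' // r x x'} = Nat.card {y // s (φ x) y} :=
  Nat.card_congr ((Equiv.ofBijective φ hφ).subtypeEquiv (hred x))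

theorem equivalence_of_iff_eq {α γ : Type*} {r : α → α → Prop} (f : α → γ)
    (h : ∀ x y, r x y ↔ f x = f y) : Equivalence r where
  refl x := (h x x).2 rfl
  symm hxy := (h _ _).2 ((h _ _).1 hxy).symm
  trans hxy hyz := (h _ _).2 (((h _ _).1 hxy).trans ((h _ _).1 hyz))

def finMod {m n : ℕ} (hn : 0 < n) (k : Fin m) : Fin n := ⟨k % n, Nat.mod_lt _ hn⟩

theorem finMod_surjective {m n : ℕ} (hn : 0 < n) (hnm : n ≤ m) :
    Surjective (finMod hn : Fin m → Fin n) :=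
  fun i => ⟨Fin.castLE hnm i, Fin.ext (Nat.mod_eq_of_lt i.isLt)⟩

section Block

variable {β : ℕ → Type*}

def block : ℕ ⊕ (Σ n, β n) → ℕ ⊕ ℕ := Sum.map id Sigma.fst

@[simp] theorem block_inl (a : ℕ) : block (Sum.inl a : ℕ ⊕ (Σ n, β n)) = Sum.inl a := rfl

@[simp] theorem block_inr (p : Σ n, β n) : block (Sum.inr p : ℕ ⊕ (Σ n, β n)) = Sum.inr p.1 :=
  rfl

theorem card_block_fiber_inl (a : ℕ) :
    Nat.card {y : ℕ ⊕ (Σ n, β n) // block y = Sum.inl a} = 1 := by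
  have hfiber : {y : ℕ ⊕ (Σ n, β n) | block y = Sum.inl a} = {Sum.inl a} := by
    ext (b | p) <;> simp
  rw [← Nat.card_unique (α := ({Sum.inl a} : Set (ℕ ⊕ (Σ n, β n)))), ← hfiber]
  rfl

theorem card_block_fiber_inr (n : ℕ) :
    Nat.card {y : ℕ ⊕ (Σ n, β n) // block y = Sum.inr n} = Nat.card (β n) := by
  have hfiber : {y : ℕ ⊕ (Σ n, β n) | block y = Sum.inr n} =
      Set.range (fun b : β n => Sum.inr ⟨n, b⟩) := by
    ext (a | ⟨m, i⟩)
    · simp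
    · simp only [Set.mem_ofPred_eq, block_inr, Sum.inr.injEq, Set.mem_range]
      constructor
      · rintro rfl
        exact ⟨i, rfl⟩
      · rintro ⟨j, h⟩
        exact (Sigma.mk.inj_iff.1 h).1.symm
  rw [← Nat.card_range_of_injective (f := fun b : β n => (Sum.inr ⟨n, b⟩ : ℕ ⊕ (Σ n, β n)))
    fun _ _ h => sigma_mk_injective (Sum.inr_injective h), ← hfiber]
  rfl

theorem card_subtype_rel_eq_card_block_fiber {r : (ℕ ⊕ (Σ n, β n)) → (ℕ ⊕ (Σ n, β n)) → Prop}
    (hr : ∀ x y, r x y ↔ block x = block y) (x : ℕ ⊕ (Σ n, β n)) :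
    Nat.card {y // r x y} = Nat.card {y : ℕ ⊕ (Σ n, β n) // block y = block x} :=
  Nat.card_congr (Equiv.subtypeEquivRight fun y => (hr x y).trans eq_comm)

end Block

theorem e15_iff (x x' : X15) : E15 x x' ↔ block x = block x' := by
  rcases x with a | ⟨n, i⟩ <;> rcases x' with b | ⟨m, j⟩ <;> simp [E15, block]

theorem f15_iff (y y' : Y15) : F15 y y' ↔ block y = block y' := by
  rcases y with a | ⟨n, i⟩ <;> rcases y' with b | ⟨m, j⟩ <;> simp [F15, block]

theorem equivalence_e15 : Equivalence E15 := equivalence_of_iff_eq block e15_iff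

theorem equivalence_f15 : Equivalence F15 := equivalence_of_iff_eq block f15_iff

def toY15 : X15 → Y15
  | Sum.inl a => Sum.inl (a + 1)
  | Sum.inr ⟨0, _⟩ => Sum.inl 0
  | Sum.inr ⟨n + 1, k⟩ => Sum.inr ⟨n, finMod (by omega) k⟩

def shiftBlock : ℕ ⊕ ℕ → ℕ ⊕ ℕ
  | Sum.inl a => Sum.inl (a + 1)
  | Sum.inr 0 => Sum.inl 0
  | Sum.inr (n + 1) => Sum.inr n

theorem shiftBlock_injective : Injective shiftBlock := by
  rintro (a | _ | n) (b | _ | m) h <;> simp_all [shiftBlock]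

theorem block_toY15 (x : X15) : block (toY15 x) = shiftBlock (block x) := by
  rcases x with a | ⟨_ | n, k⟩ <;> rfl

theorem toY15_surjective : Surjective toY15 := by
  rintro ((_ | a) | ⟨n, k⟩)
  · exact ⟨Sum.inr ⟨0, 0⟩, rfl⟩
  · exact ⟨Sum.inl a, rfl⟩
  · obtain ⟨k', hk'⟩ := finMod_surjective (m := 2 * (n + 1) + 2) (by omega) (by omega) k
    exact ⟨Sum.inr ⟨n + 1, k'⟩, by rw [← hk']; rfl⟩

theorem e15_iff_f15_toY15 (x x' : X15) : E15 x x' ↔ F15 (toY15 x) (toY15 x') := by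
  rw [e15_iff, f15_iff, block_toY15, block_toY15, shiftBlock_injective.eq_iff]

def toX15 : Y15 → X15 :=
  Sum.map id (Sigma.map id fun n => finMod (n := 2 * n + 2) (by omega))

theorem toX15_surjective : Surjective toX15 :=
  Sum.map_surjective.2 ⟨surjective_id,
    surjective_id.sigma_map fun _ => finMod_surjective _ (by omega)⟩

theorem f15_iff_e15_toX15 (y y' : Y15) : F15 y y' ↔ E15 (toX15 y) (toX15 y') := by
  rw [f15_iff, e15_iff]
  rcases y with a | ⟨n, i⟩ <;> rcases y' with b | ⟨m, j⟩ <;> rfl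

theorem card_e15_class_inr_zero : Nat.card {x' // E15 (Sum.inr ⟨0, 0⟩) x'} = 2 :=
  (card_subtype_rel_eq_card_block_fiber e15_iff _).trans (by simp [card_block_fiber_inr])

theorem card_f15_class_ne_two (y : Y15) : Nat.card {y' // F15 y y'} ≠ 2 := by
  refine (card_subtype_rel_eq_card_block_fiber f15_iff y).trans_ne ?_
  rcases y with a | ⟨n, i⟩
  · simp [card_block_fiber_inl]
  · simp [card_block_fiber_inr]

theorem stmt15 :
    Equivalence E15 ∧ Equivalence F15 ∧
    (∃ φ : X15 → Y15, Function.Surjective φ ∧ ∀ x x' : X15, E15 x x' ↔ F15 (φ x) (φ x')) ∧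
    (∃ ψ : Y15 → X15, Function.Surjective ψ ∧ ∀ y y' : Y15, F15 y y' ↔ E15 (ψ y) (ψ y')) ∧
    ¬ ∃ φ : X15 → Y15, Function.Bijective φ ∧ ∀ x x' : X15, E15 x x' ↔ F15 (φ x) (φ x') := by
  refine ⟨equivalence_e15, equivalence_f15, ⟨toY15, toY15_surjective, e15_iff_f15_toY15⟩,
    ⟨toX15, toX15_surjective, f15_iff_e15_toX15⟩, ?_⟩
  rintro ⟨φ, hφ, hred⟩
  have hcard := Nat.card_subtype_rel_eq_of_bijective hφ hred (Sum.inr ⟨0, 0⟩)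
  rw [card_e15_class_inr_zero] at hcard
  exact card_f15_class_ne_two _ hcard.symm
end

section
/- Let E and F be equivalence relations on finite sets X and Y. Then there exists an injective reduction from E to F if and only if for every positive integer k, the number of E-classes of size at least k is at most the number of F-classes of size at least k. -/
universe u

/-!
An injective reduction from `E` to `F` amounts to an injective map `g` from `E`-classes to
`F`-classes together with an embedding of each class `C` into `g C`. So it exists iff the
`E`-classes can be matched injectively to `F`-classes at least as large. By Hall's theorem such
a matching exists iff the counting condition holds: the `F`-classes at least as large as some
member of a set `S` of `E`-classes are those at least as large as the smallest member of `S`, and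
by the condition there are at least as many of them as there are `E`-classes of at least that
size, hence at least `|S|`.
-/

open Function

section Counting

variable {α β : Type*} [Finite β] {s : α → ℕ} {t : β → ℕ}

theorem card_le_card_of_injective_of_le {g : α → β} (hg : Injective g)
    (hst : ∀ a, s a ≤ t (g a)) (k : ℕ) :
    Nat.card {a // k ≤ s a} ≤ Nat.card {b // k ≤ t b} :=
  Nat.card_le_card_of_injective (Subtype.map g fun a ha => ha.trans (hst a))
    (Subtype.map_injective _ hg)

theorem exists_injective_le_of_card_le [Finite α] (hs : ∀ a, 0 < s a)
    (h : ∀ k, 0 < k → Nat.card {a // k ≤ s a} ≤ Nat.card {b // k ≤ t b}) :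
    ∃ g : α → β, Injective g ∧ ∀ a, s a ≤ t (g a) := by
  classical
  have := Fintype.ofFinite α
  have := Fintype.ofFinite β
  have hcard (k : ℕ) (hk : 0 < k) :
      (Finset.univ.filter fun a => k ≤ s a).card ≤ (Finset.univ.filter fun b => k ≤ t b).card := by
    simpa only [Nat.card_eq_fintype_card, Fintype.card_subtype] using h k hk
  simpa using (Finset.all_card_le_biUnion_card_iff_exists_injective
    fun a => Finset.univ.filter fun b => s a ≤ t b).mp fun S => by
    rcases S.eq_empty_or_nonempty with rfl | hS
    · simp
    obtain ⟨a₀, ha₀, hmin⟩ := S.exists_min_image s hS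
    calc S.card ≤ (Finset.univ.filter fun a => s a₀ ≤ s a).card :=
          Finset.card_le_card fun a ha => by simpa using hmin a ha
      _ ≤ (Finset.univ.filter fun b => s a₀ ≤ t b).card := hcard _ (hs a₀)
      _ ≤ (S.biUnion _).card := Finset.card_le_card <|
          Finset.subset_biUnion_of_mem (fun a => Finset.univ.filter fun b => s a ≤ t b) ha₀

theorem exists_injective_le_iff_card_le [Finite α] (hs : ∀ a, 0 < s a) :
    (∃ g : α → β, Injective g ∧ ∀ a, s a ≤ t (g a)) ↔
      ∀ k, 0 < k → Nat.card {a // k ≤ s a} ≤ Nat.card {b // k ≤ t b} :=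
  ⟨fun ⟨_, hg, hst⟩ k _ => card_le_card_of_injective_of_le hg hst k,
    exists_injective_le_of_card_le hs⟩

end Counting

section Fibers

variable {X Y Q Q' : Type*} {p : X → Q} {p' : Y → Q'}

theorem exists_injective_of_embedding_fibers {g : Q → Q'} (hg : Injective g)
    (e : ∀ q, {x // p x = q} ↪ {y // p' y = g q}) :
    ∃ φ : X → Y, Injective φ ∧ ∀ x, p' (φ x) = g (p x) := by
  refine ⟨fun x => e (p x) ⟨x, rfl⟩, ?_, fun x => (e (p x) ⟨x, rfl⟩).2⟩
  -- via `X ≃ Σ q, {x // p x = q}` and likewise for `Y`, `φ` is `Sigma.map g e`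
  have hσ : Injective (Sigma.map (β₂ := fun q' => {y // p' y = q'}) g fun q => e q) :=
    hg.sigma_map fun q => (e q).injective
  exact (Equiv.sigmaFiberEquiv p').injective.comp <|
    hσ.comp (Equiv.sigmaFiberEquiv p).symm.injective

theorem exists_injective_comp_eq_of_iff (hp : Surjective p) {φ : X → Y}
    (hφ : ∀ x x', p x = p x' ↔ p' (φ x) = p' (φ x')) :
    ∃ g : Q → Q', Injective g ∧ ∀ x, p' (φ x) = g (p x) := by
  have hsec (x : X) : p (surjInv hp (p x)) = p x := surjInv_eq hp _
  refine ⟨fun q => p' (φ (surjInv hp q)), fun q q' h => ?_, fun x => ((hφ _ _).mp (hsec x)).symm⟩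
  rw [← surjInv_eq hp q, ← surjInv_eq hp q']
  exact (hφ _ _).mpr h

theorem exists_injective_iff_card_fiber_le [Finite X] [Finite Y] (hp : Surjective p) :
    (∃ φ : X → Y, Injective φ ∧ ∀ x x', p x = p x' ↔ p' (φ x) = p' (φ x')) ↔
      ∃ g : Q → Q', Injective g ∧ ∀ q, Nat.card {x // p x = q} ≤ Nat.card {y // p' y = g q} := by
  constructor
  · rintro ⟨φ, hφ, hp'φ⟩
    obtain ⟨g, hg, hcomm⟩ := exists_injective_comp_eq_of_iff hp hp'φ
    refine ⟨g, hg, fun q => Nat.card_le_card_of_injective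
      (fun x => ⟨φ x, by rw [hcomm, x.2]⟩) fun x x' h => Subtype.ext (hφ (congrArg Subtype.val h))⟩
  · rintro ⟨g, hg, hcard⟩
    classical
    have := Fintype.ofFinite X
    have := Fintype.ofFinite Y
    have e (q : Q) : {x // p x = q} ↪ {y // p' y = g q} :=
      Classical.choice <| Function.Embedding.nonempty_of_card_le <| by
        simpa only [Nat.card_eq_fintype_card] using hcard q
    obtain ⟨φ, hφ, hcomm⟩ := exists_injective_of_embedding_fibers hg e
    exact ⟨φ, hφ, fun x x' => by rw [hcomm, hcomm, hg.eq_iff]⟩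

end Fibers

namespace EqClasses

variable {X : Type u} {E : X → X → Prop}

def of (E : X → X → Prop) (x : X) : EqClasses E := ⟨{y | E x y}, x, rfl⟩

theorem of_surjective : Surjective (of E) := by
  rintro ⟨_, x, rfl⟩
  exact ⟨x, rfl⟩

theorem of_eq_iff_mem (hE : Equivalence E) {x : X} {C : EqClasses E} :
    of E x = C ↔ x ∈ (C : Set X) := by
  obtain ⟨_, z, rfl⟩ := C
  refine Subtype.ext_iff.trans
    ⟨fun h => h ▸ (hE.refl x : x ∈ (of E x : Set X)), fun hzx => Set.ext fun y => ?_⟩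
  exact ⟨hE.trans hzx, hE.trans (hE.symm hzx)⟩

theorem of_eq_of_iff (hE : Equivalence E) {x x' : X} : of E x = of E x' ↔ E x x' :=
  (of_eq_iff_mem hE).trans ⟨hE.symm, hE.symm⟩

theorem card_fiber_of (hE : Equivalence E) (C : EqClasses E) :
    Nat.card {x // of E x = C} = Nat.card C :=
  Nat.card_congr <| Equiv.subtypeEquivRight fun _ => of_eq_iff_mem hE

theorem card_pos [Finite X] (hE : Equivalence E) (C : EqClasses E) : 0 < Nat.card C := by
  obtain ⟨x, rfl⟩ := of_surjective C
  have : Nonempty (of E x : Set X) := ⟨⟨x, hE.refl x⟩⟩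
  exact Nat.card_pos

end EqClasses

theorem nGe_natCast {X : Type u} [Finite X] (E : X → X → Prop) (k : ℕ) :
    nGe E k = Nat.card {C : EqClasses E // k ≤ Nat.card C} := by
  rw [nGe, ← Nat.cast_card]
  refine congrArg _ (Nat.card_congr <| (Equiv.subtypeSubtypeEquivSubtypeInter _ _).symm.trans <|
    Equiv.subtypeEquivRight fun C => ?_)
  rw [← Nat.cast_card, Nat.cast_le]

theorem stmt19 {X Y : Type u} [Fintype X] [Fintype Y]
    (E : X → X → Prop) (F : Y → Y → Prop)
    (hE : Equivalence E) (hF : Equivalence F) :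
    (∃ φ : X → Y, Function.Injective φ ∧ ∀ x x' : X, E x x' ↔ F (φ x) (φ x')) ↔
      ∀ k : ℕ, 0 < k → nGe E (k : Cardinal.{u}) ≤ nGe F (k : Cardinal.{u}) := by
  simp only [← EqClasses.of_eq_of_iff hE, ← EqClasses.of_eq_of_iff hF, nGe_natCast, Nat.cast_le]
  rw [exists_injective_iff_card_fiber_le (p' := EqClasses.of F) EqClasses.of_surjective]
  simp only [EqClasses.card_fiber_of hE, EqClasses.card_fiber_of hF]
  exact exists_injective_le_iff_card_le (t := fun D : EqClasses F => Nat.card D)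
    (EqClasses.card_pos hE)
end
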